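/- arXiv:2511.14316 — 2 statements merged into one kernel-verified Lean document; each statement's English description precedes it below -/
import Mathlib

section
/- Let f ∈ ℂ[x,y]_d, let β_1, …, β_r ∈ ℂ be pairwise distinct with 1 ≤ r ≤ d+1, and suppose f(x,y) = Σ_{k=1}^{r} λ_k (x+β_k y)^d with λ_1, …, λ_r ∈ ℂ. Then for each fixed i with 1 ≤ i ≤ r, one has λ_i ≠ 0 if and only if ∏_{ℓ≠i} (∂y − β_ℓ ∂x) ∘ f ≠ 0. -/
open MvPolynomial

/-- The linear form `x + β y` in `ℂ[x,y]`. -/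
noncomputable def linForm (β : ℂ) : MvPolynomial (Fin 2) ℂ := X 0 + C β * X 1

/-- The first-order differential operator `∂y − β ∂x` acting on `ℂ[x,y]`. -/
noncomputable def Dop (β : ℂ) : Module.End ℂ (MvPolynomial (Fin 2) ℂ) :=
  (pderiv (1 : Fin 2)).toLinearMap - β • (pderiv (0 : Fin 2)).toLinearMap

/-!
Each operator `∂y − b ∂x` maps `(x + γ y)^(n+1)` to `(γ − b)(n+1)(x + γ y)^n`, so a product of
`m ≤ d` such operators sends `(x + γ y)^d` to `d(d-1)⋯(d-m+1) ∏ (γ − b) (x + γ y)^(d-m)`. This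
vanishes exactly when `γ` is one of the `b`'s. Applied to `f`, the operator `∏_{ℓ≠i} (∂y − β_ℓ ∂x)`
(of order `r - 1 ≤ d`) kills every summand except the `i`-th, which it sends to `λ_i` times a
nonzero polynomial.
-/

-- `Dop b` is definitionally the derivation `∂y − b ∂x`, so the Leibniz rule applies.
lemma Dop_pow_succ (b : ℂ) (p : MvPolynomial (Fin 2) ℂ) (n : ℕ) :
    Dop b (p ^ (n + 1)) = (n + 1) * p ^ n * Dop b p := by
  have h := (pderiv 1 - b • pderiv 0 : Derivation ℂ (MvPolynomial (Fin 2) ℂ) _).leibniz_pow p (n + 1)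
  rw [Nat.add_sub_cancel, nsmul_eq_mul, smul_eq_mul, ← mul_assoc, Nat.cast_succ] at h
  exact h

lemma Dop_linForm (b γ : ℂ) : Dop b (linForm γ) = C (γ - b) := by
  simp [Dop, linForm, pderiv_X, smul_eq_C_mul]

lemma Dop_linForm_pow_succ (b γ : ℂ) (n : ℕ) :
    Dop b (linForm γ ^ (n + 1)) = C ((γ - b) * (n + 1)) * linForm γ ^ n := by
  rw [Dop_pow_succ, Dop_linForm, map_mul]
  simp only [map_add, map_natCast, map_one]
  ring

lemma linForm_ne_zero (γ : ℂ) : linForm γ ≠ 0 := by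
  intro h
  simpa [linForm] using congrArg (eval fun j : Fin 2 => if j = 0 then (1 : ℂ) else 0) h

lemma prod_map_Dop_apply_linForm_pow (γ : ℂ) (L : List ℂ) (d : ℕ) (hL : L.length ≤ d) :
    (L.map Dop).prod (linForm γ ^ d) =
      C ((d.descFactorial L.length : ℂ) * (L.map (γ - ·)).prod) * linForm γ ^ (d - L.length) := by
  induction L with
  | nil => simp
  | cons b L ih =>
    simp only [List.length_cons] at hL ⊢
    have hd : d - L.length = d - (L.length + 1) + 1 := by omega
    rw [List.map_cons, List.prod_cons, Module.End.mul_apply, ih (by omega), hd,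
      ← smul_eq_C_mul, map_smul, Dop_linForm_pow_succ, smul_eq_C_mul, ← mul_assoc, ← map_mul,
      Nat.descFactorial_succ, hd, Nat.cast_mul, Nat.cast_succ, List.map_cons, List.prod_cons]
    congr 2
    ring

lemma prod_map_Dop_apply_linForm_pow_eq_zero_iff (γ : ℂ) (L : List ℂ) (d : ℕ)
    (hL : L.length ≤ d) : (L.map Dop).prod (linForm γ ^ d) = 0 ↔ γ ∈ L := by
  have hfact : (d.descFactorial L.length : ℂ) ≠ 0 :=
    Nat.cast_ne_zero.2 fun h => (Nat.descFactorial_eq_zero_iff_lt.1 h).not_ge hL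
  rw [prod_map_Dop_apply_linForm_pow γ L d hL, mul_eq_zero, C_eq_zero, mul_eq_zero,
    or_iff_right hfact, or_iff_left (pow_ne_zero _ (linForm_ne_zero γ)), List.prod_eq_zero_iff]
  simp [sub_eq_zero]

theorem apolarity_coeff_nonzero_iff_general (d r : ℕ) (hrd : r ≤ d + 1)
    (f : MvPolynomial (Fin 2) ℂ)
    (β : Fin r → ℂ) (hβ : Function.Injective β) (lam : Fin r → ℂ)
    (hsum : f = ∑ k, C (lam k) * (linForm (β k)) ^ d) (i : Fin r) :
    lam i ≠ 0 ↔
      (((Finset.univ.erase i).toList).map fun ℓ => Dop (β ℓ)).prod f ≠ 0 := by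
  set M := (Finset.univ.erase i).toList.map β
  have hM : ∀ k, β k ∈ M ↔ k ≠ i := by simp [M, hβ.eq_iff]
  have hMd : M.length ≤ d := by simp [M]; omega
  have hD : (((Finset.univ.erase i).toList).map fun ℓ => Dop (β ℓ)) = M.map Dop := by
    simp [M, Function.comp_def]
  simp_rw [hD, hsum, map_sum, ← smul_eq_C_mul, map_smul]
  rw [Finset.sum_eq_single i (fun k _ hk => by
      rw [(prod_map_Dop_apply_linForm_pow_eq_zero_iff _ M d hMd).2 ((hM k).2 hk), smul_zero])
    (by simp), smul_ne_zero_iff]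
  simp [prod_map_Dop_apply_linForm_pow_eq_zero_iff _ M d hMd, hM]

/-- Suppose `f = Σ_{k=1}^{r} λ_k (x+β_k y)^d` with `β_1, …, β_r` pairwise distinct and
`1 ≤ r ≤ d+1`. Then for each fixed `i`, `λ_i ≠ 0` if and only if
`∏_{ℓ≠i} (∂y − β_ℓ ∂x) ∘ f ≠ 0`. -/
theorem apolarity_coeff_nonzero_iff (d r : ℕ) (hr : 1 ≤ r) (hrd : r ≤ d + 1)
    (f : MvPolynomial (Fin 2) ℂ) (hf : f.IsHomogeneous d)
    (β : Fin r → ℂ) (hβ : Function.Injective β) (lam : Fin r → ℂ)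
    (hsum : f = ∑ k, C (lam k) * (linForm (β k)) ^ d) (i : Fin r) :
    lam i ≠ 0 ↔
      (((Finset.univ.erase i).toList).map fun ℓ => Dop (β ℓ)).prod f ≠ 0 :=
  apolarity_coeff_nonzero_iff_general d r hrd f β hβ lam hsum i
end

section
/- Let f ∈ ℂ[x,y]_d be a nonzero binary form of degree d ≥ 1 and let f_x = ∂f/∂x. If FR(f) = FR(f_x), then WR(f) = FR(f). -/
/-!
Every binary form of degree `d` is a linear combination of the powers `(x + β y)^d`: discrete
Fourier inversion over the `(d+1)`-st roots of unity isolates each monomial `x^(d-j) y^j` from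
`(x + ω^k y)^d`. So `FR(f)` is finite, and dropping zero coefficients gives `WR(f) ≤ FR(f)`.
Conversely, write a minimal Waring decomposition as `f = Σ λ_k (a_k x + b_k y)^d`. Differentiating
in `x` kills the terms with `a_k = 0` and turns the others into multiples of `(x + (b_k/a_k) y)^(d-1)`,
so `FR(f_x) ≤ #{k | a_k ≠ 0} ≤ WR(f) ≤ FR(f) = FR(f_x)`. Hence every `a_k` is nonzero, every term
is a multiple of some `(x + β y)^d`, and `FR(f) ≤ WR(f)`.
-/

open MvPolynomial

/-- The Waring rank of a binary form `f ∈ ℂ[x,y]_d`: the least `r` such that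
`f = Σ_{k=1}^{r} λ_k L_k^d` with all `λ_k ∈ ℂ∖{0}` and `L_k` linear forms. -/
noncomputable def waringRank (d : ℕ) (f : MvPolynomial (Fin 2) ℂ) : ℕ :=
  sInf {r : ℕ | ∃ (lam : Fin r → ℂ) (L : Fin r → MvPolynomial (Fin 2) ℂ),
    (∀ k, lam k ≠ 0) ∧ (∀ k, (L k).IsHomogeneous 1) ∧ f = ∑ k, C (lam k) * (L k) ^ d}

/-- The F-rank of a binary form `f ∈ ℂ[x,y]_d`: the least `r ≥ 0` such that
`f = Σ_{k=1}^{r} λ_k (x+β_k y)^d` for some `λ_k, β_k ∈ ℂ`. -/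
noncomputable def fRank (d : ℕ) (f : MvPolynomial (Fin 2) ℂ) : ℕ :=
  sInf {r : ℕ | ∃ lam β : Fin r → ℂ, f = ∑ k, C (lam k) * (linForm (β k)) ^ d}

open Finset

theorem IsPrimitiveRoot.geom_sum_pow_eq_ite {K : Type*} [Field K] {ω : K} {n : ℕ}
    (hω : IsPrimitiveRoot ω n) (t : ℕ) :
    ∑ k ∈ range n, (ω ^ t) ^ k = if n ∣ t then (n : K) else 0 := by
  split_ifs with hdvd
  · simp [(hω.pow_eq_one_iff_dvd t).mpr hdvd]
  · have hne : ω ^ t ≠ 1 := fun h => hdvd ((hω.pow_eq_one_iff_dvd t).mp h)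
    rw [geom_sum_eq hne, ← pow_mul, mul_comm, pow_mul, hω.pow_eq_one, one_pow, sub_self,
      zero_div]

/-- Discrete Fourier inversion; `ω ^ (n - i)` stands for `ω⁻¹ ^ i`. -/
theorem IsPrimitiveRoot.sum_pow_smul_sum_pow_smul {K M : Type*} [Field K] [AddCommGroup M]
    [Module K M] {ω : K} {n : ℕ} (hω : IsPrimitiveRoot ω n) (c : ℕ → M) {i : ℕ} (hi : i < n) :
    ∑ k ∈ range n, ω ^ ((n - i) * k) • ∑ j ∈ range n, (ω ^ k) ^ j • c j = (n : K) • c i := by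
  have hdvd : ∀ j ∈ range n, n ∣ n - i + j ↔ j = i := by
    intro j hj
    have hj := mem_range.mp hj
    constructor
    · rintro ⟨q, hq⟩
      rcases q with _ | _ | q <;> simp only [mul_zero, mul_add, mul_one] at hq <;> omega
    · rintro rfl
      exact ⟨1, by omega⟩
  calc ∑ k ∈ range n, ω ^ ((n - i) * k) • ∑ j ∈ range n, (ω ^ k) ^ j • c j
      = ∑ j ∈ range n, (∑ k ∈ range n, (ω ^ (n - i + j)) ^ k) • c j := by
        simp_rw [smul_sum, smul_smul, sum_smul]
        rw [sum_comm]
        refine sum_congr rfl fun j _ => sum_congr rfl fun k _ => ?_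
        rw [← pow_mul, ← pow_mul, ← pow_add, add_mul, mul_comm j]
    _ = (n : K) • c i := by
        simp_rw [hω.geom_sum_pow_eq_ite, ite_smul, zero_smul]
        rw [sum_congr rfl fun j hj => if_congr (hdvd j hj) rfl rfl, sum_ite_eq' _ _ _,
          if_pos (mem_range.mpr hi)]

theorem mem_span_range_sum_pow_smul {M : Type*} [AddCommGroup M] [Module ℂ M] (c : ℕ → M)
    {n i : ℕ} (hi : i < n) :
    c i ∈ Submodule.span ℂ (Set.range fun β : ℂ => ∑ j ∈ range n, β ^ j • c j) := by
  have hω := Complex.isPrimitiveRoot_exp n (by omega)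
  rw [← Submodule.smul_mem_iff _ (Nat.cast_ne_zero.mpr (by omega : n ≠ 0) : (n : ℂ) ≠ 0),
    ← hω.sum_pow_smul_sum_pow_smul c hi]
  exact Submodule.sum_mem _ fun k _ => Submodule.smul_mem _ _ (Submodule.subset_span ⟨_, rfl⟩)

theorem linForm_pow (β : ℂ) (d : ℕ) :
    linForm β ^ d = ∑ j ∈ range (d + 1),
      β ^ j • ((d.choose j : ℂ) • (X 0 ^ (d - j) * X 1 ^ j : MvPolynomial (Fin 2) ℂ)) := by
  rw [linForm, add_comm, add_pow]
  refine sum_congr rfl fun j _ => ?_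
  simp only [smul_eq_C_mul, mul_pow, ← C_pow, map_natCast]
  ring

theorem X_pow_mul_X_pow_mem_span_linForm_pow {d j : ℕ} (hj : j ≤ d) :
    X 0 ^ (d - j) * X 1 ^ j ∈ Submodule.span ℂ (Set.range fun β => linForm β ^ d) := by
  have hchoose : (d.choose j : ℂ) ≠ 0 := Nat.cast_ne_zero.mpr (Nat.choose_pos hj).ne'
  rw [← Submodule.smul_mem_iff _ hchoose]
  simp_rw [linForm_pow]
  exact mem_span_range_sum_pow_smul
    (fun j => (d.choose j : ℂ) • (X 0 ^ (d - j) * X 1 ^ j : MvPolynomial (Fin 2) ℂ))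
    (Nat.lt_succ_of_le hj)

theorem MvPolynomial.IsHomogeneous.mem_span_linForm_pow {d : ℕ} {f : MvPolynomial (Fin 2) ℂ}
    (hf : f.IsHomogeneous d) : f ∈ Submodule.span ℂ (Set.range fun β => linForm β ^ d) := by
  rw [← support_sum_monomial_coeff f]
  refine Submodule.sum_mem _ fun m hm => ?_
  have hdeg : m 0 + m 1 = d := by
    simpa [Finsupp.weight_apply, Finsupp.sum_fintype] using hf (mem_support_iff.mp hm)
  rw [monomial_eq, Finsupp.prod_fintype _ _ fun _ => pow_zero _, Fin.prod_univ_two,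
    ← smul_eq_C_mul, show m 0 = d - m 1 by omega]
  exact Submodule.smul_mem _ _ (X_pow_mul_X_pow_mem_span_linForm_pow (by omega))

theorem MvPolynomial.IsHomogeneous.eq_sum_C_mul_X {σ R : Type*} [Fintype σ] [CommSemiring R]
    {L : MvPolynomial σ R} (hL : L.IsHomogeneous 1) :
    L = ∑ i, C (coeff (Finsupp.single i 1) L) * X i := by
  classical
  ext m
  simp only [coeff_sum, coeff_C_mul, coeff_X, mul_ite, mul_one, mul_zero]
  by_cases hm : m.degree = 1
  · obtain ⟨i, rfl⟩ := (Finsupp.sum_eq_one_iff m).mp hm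
    simp [Finsupp.single_left_inj one_ne_zero]
  · rw [hL.coeff_eq_zero hm]
    refine (sum_eq_zero fun i _ => if_neg fun h => hm ?_).symm
    rw [← h, Finsupp.degree_single]

variable {d r : ℕ} {f : MvPolynomial (Fin 2) ℂ}

/-- `fRank d f` and `waringRank d f` are the infima of `{r | HasFDecomposition d f r}` and
`{r | HasWaringDecomposition d f r}`; both are `0` when no decomposition exists. -/
def HasFDecomposition (d : ℕ) (f : MvPolynomial (Fin 2) ℂ) (r : ℕ) : Prop :=
  ∃ lam β : Fin r → ℂ, f = ∑ k, C (lam k) * linForm (β k) ^ d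

def HasWaringDecomposition (d : ℕ) (f : MvPolynomial (Fin 2) ℂ) (r : ℕ) : Prop :=
  ∃ (lam : Fin r → ℂ) (L : Fin r → MvPolynomial (Fin 2) ℂ),
    (∀ k, lam k ≠ 0) ∧ (∀ k, (L k).IsHomogeneous 1) ∧ f = ∑ k, C (lam k) * L k ^ d

theorem fRank_le (h : HasFDecomposition d f r) : fRank d f ≤ r :=
  Nat.sInf_le h

theorem hasFDecomposition_fRank (h : HasFDecomposition d f r) :
    HasFDecomposition d f (fRank d f) :=
  Nat.sInf_mem (s := {r | HasFDecomposition d f r}) ⟨r, h⟩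

theorem waringRank_le (h : HasWaringDecomposition d f r) : waringRank d f ≤ r :=
  Nat.sInf_le h

theorem hasWaringDecomposition_waringRank (h : HasWaringDecomposition d f r) :
    HasWaringDecomposition d f (waringRank d f) :=
  Nat.sInf_mem (s := {r | HasWaringDecomposition d f r}) ⟨r, h⟩

theorem Finset.sum_eq_sum_fin_card {ι M : Type*} [AddCommMonoid M] (S : Finset ι) (g : ι → M) :
    ∑ k ∈ S, g k = ∑ j : Fin #S, g (S.equivFin.symm j) := by
  rw [← sum_coe_sort]
  exact (S.equivFin.symm.sum_comp _).symm

theorem hasFDecomposition_card {ι : Type*} (S : Finset ι) (lam β : ι → ℂ)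
    (hf : f = ∑ k ∈ S, C (lam k) * linForm (β k) ^ d) : HasFDecomposition d f #S :=
  ⟨_, _, hf.trans (S.sum_eq_sum_fin_card _)⟩

theorem hasWaringDecomposition_card {ι : Type*} (S : Finset ι) (lam : ι → ℂ)
    (L : ι → MvPolynomial (Fin 2) ℂ) (hlam : ∀ k ∈ S, lam k ≠ 0)
    (hL : ∀ k ∈ S, (L k).IsHomogeneous 1) (hf : f = ∑ k ∈ S, C (lam k) * L k ^ d) :
    HasWaringDecomposition d f #S :=
  ⟨_, _, fun j => hlam _ (S.equivFin.symm j).2, fun j => hL _ (S.equivFin.symm j).2,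
    hf.trans (S.sum_eq_sum_fin_card _)⟩

theorem MvPolynomial.IsHomogeneous.exists_hasFDecomposition (hf : f.IsHomogeneous d) :
    ∃ r, HasFDecomposition d f r := by
  obtain ⟨c, hc⟩ := Finsupp.mem_span_range_iff_exists_finsupp.mp hf.mem_span_linForm_pow
  refine ⟨_, hasFDecomposition_card c.support c id ?_⟩
  simp [← hc, Finsupp.sum, smul_eq_C_mul]

theorem linForm_isHomogeneous (β : ℂ) : (linForm β).IsHomogeneous 1 :=
  (isHomogeneous_X _ _).add ((isHomogeneous_X _ _).C_mul β)

theorem HasFDecomposition.exists_hasWaringDecomposition_le (h : HasFDecomposition d f r) :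
    ∃ s ≤ r, HasWaringDecomposition d f s := by
  obtain ⟨lam, β, hf⟩ := h
  refine ⟨_, (card_filter_le _ _).trans_eq (card_fin r),
    hasWaringDecomposition_card {k | lam k ≠ 0} lam (fun k => linForm (β k))
      (fun k hk => (mem_filter.mp hk).2) (fun k _ => linForm_isHomogeneous _) ?_⟩
  rw [hf, sum_filter_of_ne]
  intro k _ hk hlam
  simp [hlam] at hk

theorem waringRank_le_fRank (hf : f.IsHomogeneous d) : waringRank d f ≤ fRank d f := by
  obtain ⟨r, hr⟩ := hf.exists_hasFDecomposition
  obtain ⟨s, hs, hw⟩ := (hasFDecomposition_fRank hr).exists_hasWaringDecomposition_le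
  exact (waringRank_le hw).trans hs

theorem exists_waringRank_decomposition (hf : f.IsHomogeneous d) :
    ∃ lam a b : Fin (waringRank d f) → ℂ,
      f = ∑ k, C (lam k) * (C (a k) * X 0 + C (b k) * X 1) ^ d := by
  obtain ⟨r, hr⟩ := hf.exists_hasFDecomposition
  obtain ⟨s, -, hw⟩ := hr.exists_hasWaringDecomposition_le
  obtain ⟨lam, L, -, hL, hfL⟩ := hasWaringDecomposition_waringRank hw
  refine ⟨lam, fun k => coeff (Finsupp.single 0 1) (L k), fun k => coeff (Finsupp.single 1 1) (L k),
    hfL.trans (sum_congr rfl fun k _ => ?_)⟩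
  rw [(hL k).eq_sum_C_mul_X, Fin.sum_univ_two]

theorem C_mul_X_add_C_mul_X_eq {a : ℂ} (b : ℂ) (ha : a ≠ 0) :
    C a * X 0 + C b * X 1 = C a * linForm (b / a) := by
  rw [linForm, mul_add, ← mul_assoc, ← map_mul, mul_div_cancel₀ _ ha]

theorem C_mul_linear_pow_eq {a : ℂ} (c b : ℂ) (e : ℕ) (ha : a ≠ 0) :
    C c * (C a * X 0 + C b * X 1) ^ e = C (c * a ^ e) * linForm (b / a) ^ e := by
  rw [C_mul_X_add_C_mul_X_eq b ha, mul_pow, ← C_pow, ← mul_assoc, ← map_mul]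

theorem pderiv_C_mul_linear_pow (c a b : ℂ) (e : ℕ) :
    pderiv 0 (C c * (C a * X 0 + C b * X 1) ^ e)
      = C (c * e * a) * (C a * X 0 + C b * X 1 : MvPolynomial (Fin 2) ℂ) ^ (e - 1) := by
  simp only [pderiv_C_mul, pderiv_pow, map_add, pderiv_X_self, pderiv_X_of_ne one_ne_zero,
    mul_one, mul_zero, add_zero, map_mul, map_natCast]
  ring

section Coordinates

variable {ι : Type*} [Fintype ι] {lam a b : ι → ℂ}

theorem fRank_pderiv_le_card_filter
    (hf : f = ∑ k, C (lam k) * (C (a k) * X 0 + C (b k) * X 1) ^ d) :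
    fRank (d - 1) (pderiv 0 f) ≤ #{k | a k ≠ 0} := by
  refine fRank_le (hasFDecomposition_card _ (fun k => lam k * d * a k * a k ^ (d - 1))
    (fun k => b k / a k) ?_)
  rw [hf, map_sum, ← sum_filter_of_ne (p := fun k => a k ≠ 0)]
  · refine sum_congr rfl fun k hk => ?_
    rw [pderiv_C_mul_linear_pow, C_mul_linear_pow_eq _ _ _ (mem_filter.mp hk).2]
  · intro k _ hk hak
    simp [hak] at hk

theorem fRank_le_card_of_forall_ne_zero
    (hf : f = ∑ k, C (lam k) * (C (a k) * X 0 + C (b k) * X 1) ^ d) (ha : ∀ k, a k ≠ 0) :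
    fRank d f ≤ Fintype.card ι := by
  refine fRank_le (hasFDecomposition_card univ (fun k => lam k * a k ^ d) (fun k => b k / a k) ?_)
  rw [hf]
  exact sum_congr rfl fun k _ => C_mul_linear_pow_eq _ _ _ (ha k)

end Coordinates

theorem waringRank_eq_fRank_of_fRank_eq_general (d : ℕ) (f : MvPolynomial (Fin 2) ℂ)
    (hf : f.IsHomogeneous d)
    (h : fRank d f = fRank (d - 1) (pderiv (0 : Fin 2) f)) :
    waringRank d f = fRank d f := by
  obtain ⟨lam, a, b, hdec⟩ := exists_waringRank_decomposition hf
  have hWF := waringRank_le_fRank hf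
  have hfx := fRank_pderiv_le_card_filter hdec
  have hall : ∀ k, a k ≠ 0 := by
    have hcard : #{k | a k ≠ 0} = #(univ : Finset (Fin (waringRank d f))) :=
      (card_filter_le _ _).antisymm (by rw [card_univ, Fintype.card_fin]; omega)
    simpa using card_filter_eq_iff.mp hcard
  exact hWF.antisymm ((fRank_le_card_of_forall_ne_zero hdec hall).trans_eq (Fintype.card_fin _))

/-- For a nonzero binary form `f ∈ ℂ[x,y]_d`, `d ≥ 1`, with `f_x = ∂f/∂x`:
if `FR(f) = FR(f_x)` then `WR(f) = FR(f)`. -/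
theorem waringRank_eq_fRank_of_fRank_eq (d : ℕ) (hd : 1 ≤ d) (f : MvPolynomial (Fin 2) ℂ)
    (hf : f.IsHomogeneous d) (hf0 : f ≠ 0)
    (h : fRank d f = fRank (d - 1) (pderiv (0 : Fin 2) f)) :
    waringRank d f = fRank d f :=
  waringRank_eq_fRank_of_fRank_eq_general d f hf h
end
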